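/- Let G, H be nonzero formal power series in ℝ[[ρ,θ]] and let ξ < 0. Define the ξ-componential polynomial K_ξ(F)(θ) := Σ_{(i,j) ∈ σ(F,ξ) ∩ Δ(F)} a_{i,j}(F) θ^j, where σ(F,ξ) is the face of ℘(Δ(F)) on which the linear functional (i,j) ↦ i − j/ξ attains its minimum over ℘(Δ(F)). Then K_ξ(G·H) = K_ξ(G) · K_ξ(H). -/

import Mathlib

open scoped Pointwise

/-- The coefficient of `ρ^i θ^j` in a formal power series in two variables over `ℝ`. -/
noncomputable def coef (F : MvPowerSeries (Fin 2) ℝ) (p : ℕ × ℕ) : ℝ :=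
  MvPowerSeries.coeff (R := ℝ) (Finsupp.single (0 : Fin 2) p.1 + Finsupp.single (1 : Fin 2) p.2) F

/-- The support (valid index set) `Δ(F)` of a power series. -/
noncomputable def suppSet (F : MvPowerSeries (Fin 2) ℝ) : Set (ℕ × ℕ) :=
  {p | coef F p ≠ 0}

/-- Embedding of lattice indices into `ℝ²`. -/
noncomputable def embed (p : ℕ × ℕ) : ℝ × ℝ := ((p.1 : ℝ), (p.2 : ℝ))

/-- The lower convex semi-hull `℘(S) = conv(S + ℝ≥0²)` of a set of lattice points. -/
noncomputable def lsh (S : Set (ℕ × ℕ)) : Set (ℝ × ℝ) :=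
  convexHull ℝ (embed '' S + {q : ℝ × ℝ | 0 ≤ q.1 ∧ 0 ≤ q.2})

/-- The linear functional `(u,v) ↦ u − v/ξ`. -/
noncomputable def phiFun (ξ : ℝ) (q : ℝ × ℝ) : ℝ := q.1 - q.2 / ξ

/-- The `ξ`-component `σ(F,ξ)`: the face of `℘(Δ(F))` on which
`(u,v) ↦ u − v/ξ` attains its minimum over `℘(Δ(F))`. -/
noncomputable def component (F : MvPowerSeries (Fin 2) ℝ) (ξ : ℝ) : Set (ℝ × ℝ) :=
  {p | p ∈ lsh (suppSet F) ∧ ∀ q ∈ lsh (suppSet F), phiFun ξ p ≤ phiFun ξ q}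

/-- The `ξ`-componential polynomial `K_ξ(F)(θ) = Σ_{(i,j) ∈ σ(F,ξ) ∩ Δ(F)} a_{i,j} θ^j`. -/
noncomputable def Kpoly (F : MvPowerSeries (Fin 2) ℝ) (ξ : ℝ) : Polynomial ℝ :=
  ∑ᶠ p ∈ {p : ℕ × ℕ | p ∈ suppSet F ∧ embed p ∈ component F ξ},
    Polynomial.C (coef F p) * Polynomial.X ^ p.2


/-!
Give the lattice point `(i, j)` the weight `i - j/ξ`. For `ξ < 0` it is additive, nonnegative
and has finite sublevel sets, so every nonzero series has a minimal weight `m(F)` on `Δ(F)`, and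
the lattice points of `Δ(F)` on the face `σ(F, ξ)` are exactly those of weight `m(F)`. Hence
`K_ξ(F)` is the weight-`m(F)` part of `F`, read as a polynomial in `θ` (on a weight level a point
is determined by `j`). By the Cauchy product, the weight-`(m(G) + m(H))` part of `G * H` is the
product of the minimal parts of `G` and `H`; this product is nonzero since `ℝ[θ]` is a domain,
so `m(G * H) = m(G) + m(H)` and the two sides agree.
-/

open Polynomial Finset.HasAntidiagonal

attribute [local instance] Finset.HasAntidiagonal.antidiagonalOfLocallyFinite

noncomputable def latticeWeight (ξ : ℝ) (p : ℕ × ℕ) : ℝ := phiFun ξ (embed p)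

section Weight

variable {ξ : ℝ}

lemma latticeWeight_add (p q : ℕ × ℕ) :
    latticeWeight ξ (p + q) = latticeWeight ξ p + latticeWeight ξ q := by
  simp only [latticeWeight, phiFun, embed, Prod.fst_add, Prod.snd_add, Nat.cast_add]
  ring

lemma eq_of_latticeWeight_eq_of_snd_eq {p q : ℕ × ℕ}
    (hw : latticeWeight ξ p = latticeWeight ξ q) (h2 : p.2 = q.2) : p = q := by
  simp only [latticeWeight, phiFun, embed, h2, sub_left_inj, Nat.cast_inj] at hw
  exact Prod.ext hw h2

lemma northcott_latticeWeight (hξ : ξ < 0) : Northcott (latticeWeight ξ) := by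
  refine ⟨fun m => (Set.finite_Iic (⌊m⌋₊, ⌊-ξ * m⌋₊)).subset fun p hp => ?_⟩
  have hξ' : 0 < -ξ := neg_pos.2 hξ
  have hw : (p.1 : ℝ) + p.2 / -ξ ≤ m := by
    simpa [latticeWeight, phiFun, embed, div_neg, sub_neg_eq_add] using hp
  have h2 : (p.2 : ℝ) / -ξ ≤ m := by linarith [(Nat.cast_nonneg p.1 : (0 : ℝ) ≤ p.1)]
  rw [div_le_iff₀ hξ', mul_comm] at h2
  exact ⟨Nat.le_floor (by linarith [div_nonneg (Nat.cast_nonneg p.2) hξ'.le]), Nat.le_floor h2⟩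

lemma finite_latticeWeight_eq (hξ : ξ < 0) (m : ℝ) :
    {p : ℕ × ℕ | latticeWeight ξ p = m}.Finite :=
  ((northcott_latticeWeight hξ).finite_le m).subset fun _ hp => le_of_eq hp

end Weight

lemma isLinearMap_phiFun (ξ : ℝ) : IsLinearMap ℝ (phiFun ξ) where
  map_add x y := by
    simp only [phiFun, Prod.fst_add, Prod.snd_add]
    ring
  map_smul c x := by
    simp only [phiFun, Prod.smul_fst, Prod.smul_snd, smul_eq_mul]
    ring

section Face

variable {ξ m : ℝ}

lemma phiFun_nonneg (hξ : ξ < 0) {q : ℝ × ℝ} (h1 : 0 ≤ q.1) (h2 : 0 ≤ q.2) :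
    0 ≤ phiFun ξ q := by
  have : q.2 / ξ ≤ 0 := div_nonpos_of_nonneg_of_nonpos h2 hξ.le
  simp only [phiFun]
  linarith

lemma embed_mem_lsh {S : Set (ℕ × ℕ)} {p : ℕ × ℕ} (hp : p ∈ S) : embed p ∈ lsh S :=
  subset_convexHull ℝ _ ⟨embed p, ⟨p, hp, rfl⟩, 0, ⟨le_rfl, le_rfl⟩, add_zero _⟩

lemma le_phiFun_of_mem_lsh (hξ : ξ < 0) {S : Set (ℕ × ℕ)}
    (hm : ∀ p ∈ S, m ≤ latticeWeight ξ p) {q : ℝ × ℝ} (hq : q ∈ lsh S) : m ≤ phiFun ξ q := by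
  refine convexHull_min ?_ (convex_halfSpace_ge (isLinearMap_phiFun ξ) m) hq
  rintro _ ⟨_, ⟨p, hp, rfl⟩, r, ⟨hr1, hr2⟩, rfl⟩
  have hp' : m ≤ phiFun ξ (embed p) := hm p hp
  rw [Set.mem_ofPred_eq, (isLinearMap_phiFun ξ).map_add]
  linarith [phiFun_nonneg hξ hr1 hr2]

lemma embed_mem_component_iff (hξ : ξ < 0) {F : MvPowerSeries (Fin 2) ℝ}
    (hm : ∀ p ∈ suppSet F, m ≤ latticeWeight ξ p)
    (hattain : ∃ p ∈ suppSet F, latticeWeight ξ p = m) {p : ℕ × ℕ} (hp : p ∈ suppSet F) :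
    embed p ∈ component F ξ ↔ latticeWeight ξ p = m := by
  obtain ⟨p₀, hp₀, rfl⟩ := hattain
  refine ⟨fun h => le_antisymm (h.2 _ (embed_mem_lsh hp₀)) (hm p hp), fun hw => ?_⟩
  exact ⟨embed_mem_lsh hp, fun q hq => hw.trans_le (le_phiFun_of_mem_lsh hξ hm hq)⟩

end Face

section CauchyProduct

lemma coef_eq_coeff (F : MvPowerSeries (Fin 2) ℝ) (p : ℕ × ℕ) :
    coef F p = MvPowerSeries.coeff ((finTwoArrowEquiv' ℕ).symm p) F := by
  refine congrArg (fun n => MvPowerSeries.coeff n F) ?_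
  ext i
  fin_cases i <;> simp

lemma suppSet_nonempty {F : MvPowerSeries (Fin 2) ℝ} (hF : F ≠ 0) : (suppSet F).Nonempty := by
  obtain ⟨n, hn⟩ := (MvPowerSeries.ne_zero_iff_exists_coeff_ne_zero F).1 hF
  exact ⟨finTwoArrowEquiv' ℕ n, by rwa [suppSet, Set.mem_ofPred_eq, coef_eq_coeff,
    Equiv.symm_apply_apply]⟩

lemma coef_mul (G H : MvPowerSeries (Fin 2) ℝ) (p : ℕ × ℕ) :
    coef (G * H) p = ∑ x ∈ antidiagonal p, coef G x.1 * coef H x.2 := by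
  rw [coef_eq_coeff, MvPowerSeries.coeff_mul]
  refine Finset.sum_equiv ((finTwoArrowEquiv' ℕ).prodCongr (finTwoArrowEquiv' ℕ)) (fun x => ?_)
    (fun x _ => by
      simp only [coef_eq_coeff, Equiv.prodCongr_apply, Prod.map, Equiv.symm_apply_apply])
  simp [mem_antidiagonal, Equiv.eq_symm_apply, Prod.ext_iff, funext_iff, Fin.forall_fin_two]

variable {ξ mG mH : ℝ} {G H : MvPowerSeries (Fin 2) ℝ}

lemma le_latticeWeight_of_mem_suppSet_mul (hG : ∀ p ∈ suppSet G, mG ≤ latticeWeight ξ p)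
    (hH : ∀ p ∈ suppSet H, mH ≤ latticeWeight ξ p) {p : ℕ × ℕ} (hp : p ∈ suppSet (G * H)) :
    mG + mH ≤ latticeWeight ξ p := by
  rw [suppSet, Set.mem_ofPred_eq, coef_mul] at hp
  obtain ⟨x, hx, hne⟩ := Finset.exists_ne_zero_of_sum_ne_zero hp
  rw [← mem_antidiagonal.1 hx, latticeWeight_add]
  exact add_le_add (hG _ (left_ne_zero_of_mul hne)) (hH _ (right_ne_zero_of_mul hne))

lemma coef_mul_of_latticeWeight_eq (hG : ∀ p ∈ suppSet G, mG ≤ latticeWeight ξ p)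
    (hH : ∀ p ∈ suppSet H, mH ≤ latticeWeight ξ p) {p : ℕ × ℕ}
    (hp : latticeWeight ξ p = mG + mH) :
    coef (G * H) p = ∑ x ∈ antidiagonal p with
      latticeWeight ξ x.1 = mG ∧ latticeWeight ξ x.2 = mH, coef G x.1 * coef H x.2 := by
  rw [coef_mul, Finset.sum_filter_of_ne]
  intro x hx hne
  have hG' := hG _ (left_ne_zero_of_mul hne)
  have hH' := hH _ (right_ne_zero_of_mul hne)
  have hsum : latticeWeight ξ x.1 + latticeWeight ξ x.2 = mG + mH := by
    rw [← latticeWeight_add, mem_antidiagonal.1 hx, hp]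
  constructor <;> linarith

end CauchyProduct

noncomputable def weightForm (ξ m : ℝ) (F : MvPowerSeries (Fin 2) ℝ) : ℝ[X] :=
  ∑ᶠ p ∈ {p : ℕ × ℕ | latticeWeight ξ p = m}, C (coef F p) * X ^ p.2

section WeightForm

variable {ξ m : ℝ} {F : MvPowerSeries (Fin 2) ℝ}

lemma Kpoly_eq_weightForm (hξ : ξ < 0) (hm : ∀ p ∈ suppSet F, m ≤ latticeWeight ξ p)
    (hattain : ∃ p ∈ suppSet F, latticeWeight ξ p = m) : Kpoly F ξ = weightForm ξ m F := by
  refine finsum_mem_inter_support_eq _ _ _ (Set.ext fun p => ?_)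
  simp only [Set.mem_inter_iff, Function.mem_support, Set.mem_ofPred_eq, ne_eq,
    C_mul_X_pow_eq_monomial, monomial_eq_zero_iff]
  constructor
  · rintro ⟨⟨hp, hc⟩, h0⟩
    exact ⟨(embed_mem_component_iff hξ hm hattain hp).1 hc, h0⟩
  · rintro ⟨hw, h0⟩
    exact ⟨⟨h0, (embed_mem_component_iff hξ hm hattain h0).2 hw⟩, h0⟩

lemma coeff_weightForm (hξ : ξ < 0) {p : ℕ × ℕ} (hp : latticeWeight ξ p = m) :
    (weightForm ξ m F).coeff p.2 = coef F p := by
  rw [weightForm, finsum_mem_eq_finite_toFinset_sum _ (finite_latticeWeight_eq hξ m),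
    finsetSum_coeff, Finset.sum_eq_single p]
  · simp
  · intro q hq hqp
    rw [coeff_C_mul_X_pow, if_neg]
    have hq' : latticeWeight ξ q = m := by simpa using hq
    exact fun h => hqp (eq_of_latticeWeight_eq_of_snd_eq (hq'.trans hp.symm) h.symm)
  · simp [hp]

lemma weightForm_ne_zero (hξ : ξ < 0) {p : ℕ × ℕ} (hp : p ∈ suppSet F)
    (hw : latticeWeight ξ p = m) : weightForm ξ m F ≠ 0 := fun h =>
  hp (by rw [← coeff_weightForm hξ hw, h, coeff_zero])

lemma exists_mem_suppSet_of_weightForm_ne_zero (h : weightForm ξ m F ≠ 0) :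
    ∃ p ∈ suppSet F, latticeWeight ξ p = m := by
  contrapose! h
  refine finsum_mem_eq_zero_of_forall_eq_zero fun p hw => ?_
  have hc : coef F p = 0 := by_contra fun hc => h p hc hw
  rw [hc, map_zero, zero_mul]

lemma weightForm_mul (hξ : ξ < 0) {mG mH : ℝ} {G H : MvPowerSeries (Fin 2) ℝ}
    (hG : ∀ p ∈ suppSet G, mG ≤ latticeWeight ξ p)
    (hH : ∀ p ∈ suppSet H, mH ≤ latticeWeight ξ p) :
    weightForm ξ (mG + mH) (G * H) = weightForm ξ mG G * weightForm ξ mH H := by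
  simp only [weightForm, finsum_mem_eq_finite_toFinset_sum _ (finite_latticeWeight_eq hξ _)]
  set L := (finite_latticeWeight_eq hξ (mG + mH)).toFinset
  set LG := (finite_latticeWeight_eq hξ mG).toFinset
  set LH := (finite_latticeWeight_eq hξ mH).toFinset
  have hmaps : ∀ x ∈ LG ×ˢ LH, x.1 + x.2 ∈ L := by
    intro x hx
    simp_all [L, LG, LH, latticeWeight_add]
  rw [Finset.sum_mul_sum, ← Finset.sum_product', ← Finset.sum_fiberwise_of_maps_to hmaps]
  refine Finset.sum_congr rfl fun p hp => ?_
  have hfiber : {x ∈ antidiagonal p | latticeWeight ξ x.1 = mG ∧ latticeWeight ξ x.2 = mH}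
      = {x ∈ LG ×ˢ LH | x.1 + x.2 = p} := by
    ext x
    simp [LG, LH, and_comm]
  rw [coef_mul_of_latticeWeight_eq hG hH (by simpa [L] using hp), hfiber, map_sum,
    Finset.sum_mul]
  refine Finset.sum_congr rfl fun x hx => ?_
  rw [← (Finset.mem_filter.1 hx).2, Prod.snd_add, map_mul, pow_add]
  ring

end WeightForm

/-- the componential polynomial of a product is the product of the
componential polynomials: `K_ξ(G·H) = K_ξ(G) · K_ξ(H)` for every `ξ < 0`. -/
theorem Kpoly_mul (G H : MvPowerSeries (Fin 2) ℝ) (hG : G ≠ 0) (hH : H ≠ 0)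
    (ξ : ℝ) (hξ : ξ < 0) :
    Kpoly (G * H) ξ = Kpoly G ξ * Kpoly H ξ := by
  have := northcott_latticeWeight hξ
  obtain ⟨pG, hpG, hminG⟩ := Northcott.exists_min_image (latticeWeight ξ) _ (suppSet_nonempty hG)
  obtain ⟨pH, hpH, hminH⟩ := Northcott.exists_min_image (latticeWeight ξ) _ (suppSet_nonempty hH)
  have hmul := weightForm_mul hξ hminG hminH
  have hattain : ∃ p ∈ suppSet (G * H),
      latticeWeight ξ p = latticeWeight ξ pG + latticeWeight ξ pH :=
    exists_mem_suppSet_of_weightForm_ne_zero <| hmul ▸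
      mul_ne_zero (weightForm_ne_zero hξ hpG rfl) (weightForm_ne_zero hξ hpH rfl)
  rw [Kpoly_eq_weightForm hξ (fun _ => le_latticeWeight_of_mem_suppSet_mul hminG hminH) hattain,
    Kpoly_eq_weightForm hξ hminG ⟨pG, hpG, rfl⟩, Kpoly_eq_weightForm hξ hminH ⟨pH, hpH, rfl⟩,
    hmul]
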